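/- arXiv:2102.04073 — 6 statements merged into one kernel-verified Lean document; each statement's English description precedes it below -/
import Mathlib

section
/- Let p be prime and K = F_p(t) with Φ₁(x) = t(x−1)+1 and Φ₂(x) = (t+1)x. Then the set {(n₁,n₂) ∈ ℕ₀² : Φ₁^{n₁}(2) = Φ₂^{n₂}(1)} equals {(p^n, p^n) : n ∈ ℕ₀}. -/
open Polynomial

private lemma frob_inj (p : ℕ) [Fact p.Prime] (x y : Polynomial (ZMod p))
    (h : x ^ p = y ^ p) : x = y := by
  have h0 : (x - y) ^ p = 0 := by rw [sub_pow_char, h, sub_self]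
  exact sub_eq_zero.mp (pow_eq_zero_iff (Fact.out (p := p.Prime)).ne_zero |>.mp h0)

private lemma pow_of_eq (p : ℕ) [Fact p.Prime] : ∀ a : ℕ,
    ((X : Polynomial (ZMod p)) + 1) ^ a = X ^ a + 1 → ∃ n, a = p ^ n := by
  intro a
  induction a using Nat.strong_induction_on with
  | _ a ih =>
    intro h
    have hp := Fact.out (p := p.Prime)
    rcases Nat.eq_zero_or_pos a with rfl | ha
    · simp at h
    by_cases hdvd : p ∣ a
    · obtain ⟨c, rfl⟩ := hdvd
      have hc1 : 0 < c := Nat.pos_of_ne_zero fun hc => by simp [hc] at ha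
      have hlt : c < p * c := by
        calc c = 1 * c := (one_mul c).symm
        _ < p * c := (Nat.mul_lt_mul_right hc1).mpr hp.one_lt
      have heq : (((X : Polynomial (ZMod p)) + 1) ^ c) ^ p
          = ((X : Polynomial (ZMod p)) ^ c + 1) ^ p := by
        rw [← pow_mul, Nat.mul_comm c p, h, add_pow_char, one_pow, ← pow_mul, Nat.mul_comm c p]
      obtain ⟨n, rfl⟩ := ih c hlt (frob_inj p _ _ heq)
      exact ⟨n + 1, by ring⟩
    · rcases Nat.lt_or_ge a 2 with h2 | h2
      · exact ⟨0, by rw [pow_zero]; omega⟩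
      · exfalso
        have := congrArg (fun q => Polynomial.coeff q 1) h
        simp only [coeff_X_add_one_pow, coeff_add, coeff_X_pow, coeff_one] at this
        rw [if_neg (by omega), if_neg (by omega), Nat.choose_one_right, add_zero] at this
        exact hdvd ((ZMod.natCast_eq_zero_iff a p).mp this)

/-- For `K = 𝔽_p(t)`, `Φ₁(x) = t(x-1)+1`, `Φ₂(x) = (t+1)x`, the set
`{(n₁,n₂) : Φ₁^{n₁}(2) = Φ₂^{n₂}(1)}` equals `{(p^n, p^n) : n ∈ ℕ}`. -/
theorem orbit_intersection_example (p : ℕ) [Fact p.Prime] :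
    {q : ℕ × ℕ |
        (fun x : RatFunc (ZMod p) => RatFunc.X * (x - 1) + 1)^[q.1] 2 =
        (fun x : RatFunc (ZMod p) => (RatFunc.X + 1) * x)^[q.2] 1} =
      {q : ℕ × ℕ | ∃ n : ℕ, q = (p ^ n, p ^ n)} := by
  have hp := Fact.out (p := p.Prime)
  haveI : CharP (RatFunc (ZMod p)) p :=
    charP_of_injective_algebraMap (algebraMap (ZMod p) (RatFunc (ZMod p))).injective p
  have h1 : ∀ n : ℕ, (fun x : RatFunc (ZMod p) => RatFunc.X * (x - 1) + 1)^[n] 2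
      = RatFunc.X ^ n + 1 := by
    intro n
    induction n with
    | zero => norm_num
    | succ n ih => rw [Function.iterate_succ_apply', ih]; ring
  have h2 : ∀ n : ℕ, (fun x : RatFunc (ZMod p) => (RatFunc.X + 1) * x)^[n] 1
      = (RatFunc.X + 1) ^ n := by
    intro n
    induction n with
    | zero => simp
    | succ n ih => rw [Function.iterate_succ_apply', ih]; ring
  ext ⟨a, b⟩
  simp only [Set.mem_setOf_eq, h1, h2, Prod.mk.injEq]
  constructor
  · intro h
    have hX : (RatFunc.X : RatFunc (ZMod p)) = algebraMap (Polynomial (ZMod p)) _ X :=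
      RatFunc.algebraMap_X.symm
    have hpoly : (X : Polynomial (ZMod p)) ^ a + 1 = (X + 1) ^ b := by
      apply RatFunc.algebraMap_injective (ZMod p)
      rw [map_add, map_pow, map_pow, map_add, map_one, ← hX]
      exact h
    have hmonic : ((X : Polynomial (ZMod p)) + 1).Monic := by
      simpa using monic_X_add_C (1 : ZMod p)
    have hab : a = b := by
      have hd1 : ((X : Polynomial (ZMod p)) ^ a + 1).natDegree = a := by
        simpa using natDegree_X_pow_add_C (n := a) (r := (1 : ZMod p))
      have hd2 : (((X : Polynomial (ZMod p)) + 1) ^ b).natDegree = b := by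
        rw [hmonic.natDegree_pow, show ((X : Polynomial (ZMod p)) + 1).natDegree = 1 by
          simpa using natDegree_X_add_C (1 : ZMod p), mul_one]
      rw [← hd1, hpoly, hd2]
    subst hab
    obtain ⟨n, rfl⟩ := pow_of_eq p a hpoly.symm
    exact ⟨n, rfl, rfl⟩
  · rintro ⟨n, hn1, hn2⟩
    subst hn1; subst hn2
    rw [show (RatFunc.X + 1 : RatFunc (ZMod p)) ^ p ^ n = RatFunc.X ^ p ^ n + 1 by
      rw [add_pow_char_pow, one_pow]]
end

section
/- For a prime p and natural numbers n₁, n₂ with n₁, n₂ ≥ 1, the equality t^{n₁} + 1 = (t+1)^{n₂} holds in the polynomial ring F_p[t] if and only if n₁ = n₂ and n₁ is a power of p. -/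
/-!
Comparing degrees gives `n₁ = n₂ =: n`. Write `n = p ^ k * m` with `p ∤ m`. In characteristic `p`
both `X ^ n + 1` and `(X + 1) ^ n = (X ^ p ^ k + 1) ^ m` are images under the injective map
`expand (p ^ k)`, so `X ^ m + 1 = (X + 1) ^ m`. The coefficient of `X` is then `m ≠ 0` on the right,
which forces `m = 1` on the left.
-/

namespace Polynomial

variable {R : Type*}

section CommSemiring

variable [CommSemiring R]

lemma natDegree_X_pow_add_one [Nontrivial R] (n : ℕ) : (X ^ n + 1 : R[X]).natDegree = n := by
  simpa using natDegree_X_pow_add_C (n := n) (r := (1 : R))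

lemma natDegree_X_add_one_pow [Nontrivial R] (n : ℕ) : ((X + 1 : R[X]) ^ n).natDegree = n := by
  simpa using natDegree_pow_X_add_C n (1 : R)

lemma eq_one_of_X_pow_add_one_eq_X_add_one_pow {m : ℕ} (hm : (m : R) ≠ 0)
    (h : (X ^ m + 1 : R[X]) = (X + 1) ^ m) : m = 1 := by
  by_contra hm1
  have hcoeff := congrArg (coeff · 1) h
  simp only [coeff_add, coeff_X_pow, coeff_one, coeff_X_add_one_pow, Nat.choose_one_right,
    Ne.symm hm1, one_ne_zero, if_false, add_zero] at hcoeff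
  exact hm hcoeff.symm

lemma expand_X_add_one_pow (p : ℕ) [ExpChar R p] (k m : ℕ) :
    expand R (p ^ k) ((X + 1) ^ m) = (X + 1) ^ (p ^ k * m) := by
  rw [pow_mul, add_pow_expChar_pow, one_pow, map_pow, map_add, expand_X, map_one]

end CommSemiring

section CommRing

variable [CommRing R]

lemma exists_eq_pow_of_X_pow_add_one_eq_X_add_one_pow (p : ℕ) [hp : Fact p.Prime] [CharP R p]
    {n : ℕ} (h : (X ^ n + 1 : R[X]) = (X + 1) ^ n) : ∃ k, n = p ^ k := by
  have : Nontrivial R := CharP.nontrivial_of_char_ne_one hp.out.ne_one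
  obtain rfl | hn := eq_or_ne n 0
  · simp only [pow_zero, add_eq_right] at h
    exact absurd h one_ne_zero
  obtain ⟨k, m, hpm, rfl⟩ := Nat.exists_eq_pow_mul_and_not_dvd hn p hp.out.ne_one
  have hexpand : expand R (p ^ k) (X ^ m + 1) = expand R (p ^ k) ((X + 1) ^ m) := by
    rw [expand_X_add_one_pow, ← h]
    simp [pow_mul]
  rw [expand_inj (pow_pos hp.out.pos k)] at hexpand
  have hm : (m : R) ≠ 0 := by rwa [Ne, CharP.cast_eq_zero_iff R p]
  exact ⟨k, by rw [eq_one_of_X_pow_add_one_eq_X_add_one_pow hm hexpand, mul_one]⟩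

theorem X_pow_add_one_eq_X_add_one_pow_iff (p : ℕ) [hp : Fact p.Prime] [CharP R p] (n₁ n₂ : ℕ) :
    (X ^ n₁ + 1 : R[X]) = (X + 1) ^ n₂ ↔ n₁ = n₂ ∧ ∃ k, n₁ = p ^ k := by
  have : Nontrivial R := CharP.nontrivial_of_char_ne_one hp.out.ne_one
  constructor
  · intro h
    obtain rfl : n₁ = n₂ := by
      rw [← natDegree_X_pow_add_one (R := R) n₁, h, natDegree_X_add_one_pow]
    exact ⟨rfl, exists_eq_pow_of_X_pow_add_one_eq_X_add_one_pow p h⟩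
  · rintro ⟨rfl, k, rfl⟩
    rw [add_pow_char_pow, one_pow]

end CommRing

end Polynomial

theorem pow_add_one_eq_add_one_pow_iff_general (p : ℕ) (hp : p.Prime) (n₁ n₂ : ℕ) :
    (Polynomial.X ^ n₁ + 1 : Polynomial (ZMod p)) = (Polynomial.X + 1) ^ n₂ ↔
      n₁ = n₂ ∧ ∃ k : ℕ, n₁ = p ^ k :=
  have : Fact p.Prime := ⟨hp⟩
  Polynomial.X_pow_add_one_eq_X_add_one_pow_iff p n₁ n₂

/-- In `𝔽_p[t]`, for `n₁, n₂ ≥ 1`, we have `t^{n₁} + 1 = (t+1)^{n₂}` iff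
`n₁ = n₂` and `n₁` is a power of `p`. -/
theorem pow_add_one_eq_add_one_pow_iff (p : ℕ) (hp : p.Prime) (n₁ n₂ : ℕ)
    (h₁ : 1 ≤ n₁) (h₂ : 1 ≤ n₂) :
    (Polynomial.X ^ n₁ + 1 : Polynomial (ZMod p)) = (Polynomial.X + 1) ^ n₂ ↔
      n₁ = n₂ ∧ ∃ k : ℕ, n₁ = p ^ k :=
  pow_add_one_eq_add_one_pow_iff_general p hp n₁ n₂
end

section
/- Let G = F_p(t)^* and let Γ be the subgroup of G² = (F_p(t)^*)² generated by the pair (t, 1−t). Then the set of (x,y) ∈ Γ with x + y = 1 equals {(t^{p^e}, (1−t)^{p^e}) : e ∈ ℕ₀}, and this set cannot be written as a finite union of cosets of subgroups of Γ. -/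
open Polynomial

section ML
variable {p : ℕ} [Fact p.Prime]

private lemma ML_L1 (m : ℕ) (hpm : ¬ p ∣ m) (h : (X:(ZMod p)[X])^m + (1 - X)^m = 1) : m = 1 := by
  have hm0 : (m : ZMod p) ≠ 0 := by
    simpa [ZMod.natCast_eq_zero_iff] using hpm
  have hd := congrArg derivative h
  rw [derivative_add, derivative_X_pow, derivative_pow, derivative_one] at hd
  simp only [derivative_sub, derivative_one, derivative_X, zero_sub, mul_neg, mul_one] at hd
  have h2 : (C (m:ZMod p)) * X^(m-1) = (C (m:ZMod p)) * (1-X)^(m-1) := by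
    linear_combination hd
  have h3 : (X:(ZMod p)[X])^(m-1) = (1-X)^(m-1) :=
    mul_left_cancel₀ (C_ne_zero.mpr hm0) h2
  by_contra hne
  have h0 : 0 < m := Nat.pos_of_ne_zero (by rintro rfl; exact hpm (dvd_zero p))
  have hm2 : 2 ≤ m := by omega
  have := congrArg (eval 0) h3
  rw [eval_pow, eval_pow, eval_X, eval_sub, eval_one, eval_X, zero_pow (by omega : m - 1 ≠ 0)] at this
  simp at this

private lemma ML_L2 (k : ℕ) (hk : 0 < k) (h : (X:(ZMod p)[X])^k + (1 - X)^k = 1) :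
    ∃ e, k = p^e := by
  set a := k.factorization p with ha
  set m := k / p ^ a with hm
  have hkm : p ^ a * m = k := Nat.ordProj_mul_ordCompl_eq_self k p
  have hpm : ¬ p ∣ m := Nat.not_dvd_ordCompl (Fact.out) hk.ne'
  have hfrob : ((X:(ZMod p)[X])^m + (1 - X)^m) ^ p ^ a = 1 ^ p ^ a := by
    rw [add_pow_char_pow, one_pow, ← pow_mul, ← pow_mul, mul_comm m (p^a), hkm, h]
  have h1 : (X:(ZMod p)[X])^m + (1 - X)^m = 1 := by
    apply iterateFrobenius_inj (ZMod p)[X] p a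
    rw [iterateFrobenius_def, iterateFrobenius_def]
    exact hfrob
  have := ML_L1 m hpm h1
  rw [this, mul_one] at hkm; exact ⟨a, hkm.symm⟩

noncomputable instance ML_charK : CharP (RatFunc (ZMod p)) p :=
  (RingHom.charP_iff (algebraMap (ZMod p)[X] (RatFunc (ZMod p)))
    (RatFunc.algebraMap_injective _) p).mp inferInstance

private lemma ML_keyK (z : ℤ) :
    (RatFunc.X : RatFunc (ZMod p))^z + (1 - RatFunc.X)^z = 1 ↔ ∃ e : ℕ, z = (p:ℤ)^e := by
  have hinj := RatFunc.algebraMap_injective (ZMod p)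
  have hmapX : algebraMap (ZMod p)[X] (RatFunc (ZMod p)) X = RatFunc.X := RatFunc.algebraMap_X
  constructor
  · intro h
    rcases lt_trichotomy z 0 with hz | hz | hz
    · exfalso
      obtain ⟨n, rfl⟩ : ∃ n : ℕ, z = -(n:ℤ) := ⟨z.natAbs, by omega⟩
      have hn : 0 < n := by omega
      have hX : (RatFunc.X : RatFunc (ZMod p)) ≠ 0 := RatFunc.X_ne_zero
      have h1X : (1 - RatFunc.X : RatFunc (ZMod p)) ≠ 0 := by
        rw [sub_ne_zero]
        intro h1
        have : (X:(ZMod p)[X]) = 1 := hinj (by rw [hmapX, map_one, h1])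
        simpa using congrArg natDegree this
      rw [zpow_neg, zpow_neg, zpow_natCast, zpow_natCast] at h
      have heq : (1 - RatFunc.X : RatFunc (ZMod p))^n + RatFunc.X^n
          = RatFunc.X^n * (1 - RatFunc.X)^n := by
        field_simp at h
        linear_combination h
      have hpoly : ((1:(ZMod p)[X]) - X)^n + X^n = (X * (1 - X))^n := by
        apply hinj
        push_cast [map_add, map_pow, map_mul, map_sub, map_one, hmapX]
        rw [heq, mul_pow]
      have hdeg := congrArg natDegree hpoly
      have h1Xd : ((1:(ZMod p)[X]) - X).natDegree = 1 := by
        have : ((1:(ZMod p)[X]) - X) = -(X - C 1) := by rw [C_1]; ring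
        rw [this, natDegree_neg, natDegree_X_sub_C]
      have hXd : (X * (1 - X) : (ZMod p)[X]).natDegree = 2 := by
        rw [natDegree_mul X_ne_zero (by intro h0; rw [h0] at h1Xd; simp at h1Xd),
          natDegree_X, h1Xd]
      rw [natDegree_pow, hXd] at hdeg
      have hle : (((1:(ZMod p)[X]) - X)^n + X^n).natDegree ≤ n := by
        refine le_trans (natDegree_add_le _ _) ?_
        simp [natDegree_pow, h1Xd]
      omega
    · exfalso
      rw [hz, zpow_zero, zpow_zero] at h
      exact one_ne_zero (by linear_combination h : (1 : RatFunc (ZMod p)) = 0)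
    · obtain ⟨n, rfl⟩ : ∃ n : ℕ, z = (n:ℤ) := ⟨z.natAbs, by omega⟩
      have hn : 0 < n := by omega
      rw [zpow_natCast, zpow_natCast] at h
      have hpoly : (X:(ZMod p)[X])^n + (1 - X)^n = 1 := by
        apply hinj
        push_cast [map_add, map_pow, map_sub, map_one, hmapX]
        exact h
      obtain ⟨e, rfl⟩ := ML_L2 n hn hpoly
      exact ⟨e, by push_cast; ring⟩
  · rintro ⟨e, rfl⟩
    have : ((p:ℤ))^e = ((p^e : ℕ) : ℤ) := by push_cast; ring
    rw [this, zpow_natCast, zpow_natCast, ← add_pow_char_pow]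
    simp

end ML

/-- Let `Γ ≤ (𝔽_p(t)ˣ)²` be generated by `(t, 1-t)`. The set of `(x,y) ∈ Γ` with
`x + y = 1` equals `{(t^{p^e}, (1-t)^{p^e}) : e ∈ ℕ}`, and this set is not a
finite union of cosets of subgroups of `Γ`. -/
theorem mordell_lang_fails_positive_char (p : ℕ) [Fact p.Prime]
    (u v : (RatFunc (ZMod p))ˣ)
    (hu : (u : RatFunc (ZMod p)) = RatFunc.X)
    (hv : (v : RatFunc (ZMod p)) = 1 - RatFunc.X) :
    ∀ (Γ : Subgroup ((RatFunc (ZMod p))ˣ × (RatFunc (ZMod p))ˣ)),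
      Γ = Subgroup.zpowers (u, v) →
    ∀ (S : Set ((RatFunc (ZMod p))ˣ × (RatFunc (ZMod p))ˣ)),
      S = {g | g ∈ Γ ∧ (g.1 : RatFunc (ZMod p)) + (g.2 : RatFunc (ZMod p)) = 1} →
      (S = {g | ∃ e : ℕ, (g.1 : RatFunc (ZMod p)) = RatFunc.X ^ p ^ e ∧
            (g.2 : RatFunc (ZMod p)) = (1 - RatFunc.X) ^ p ^ e}) ∧
      ¬ ∃ (n : ℕ) (γ : Fin n → (RatFunc (ZMod p))ˣ × (RatFunc (ZMod p))ˣ)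
          (H : Fin n → Subgroup ((RatFunc (ZMod p))ˣ × (RatFunc (ZMod p))ˣ)),
          (∀ i, H i ≤ Γ) ∧ (∀ i, γ i ∈ Γ) ∧
          S = ⋃ i, (fun h => γ i * h) '' (H i : Set _) := by
  intro Γ hΓ S hS
  subst hΓ hS
  have hp2 : 2 ≤ p := (Fact.out : p.Prime).two_le
  have hinj := RatFunc.algebraMap_injective (ZMod p)
  have hmapX : algebraMap (ZMod p)[X] (RatFunc (ZMod p)) X = RatFunc.X := RatFunc.algebraMap_X
  -- u has infinite order
  have huinj : Function.Injective (fun z : ℤ => u ^ z) := by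
    rw [injective_zpow_iff_not_isOfFinOrder]
    intro hfin
    obtain ⟨m, hm, h1⟩ := isOfFinOrder_iff_pow_eq_one.mp hfin
    have : (RatFunc.X : RatFunc (ZMod p)) ^ m = 1 := by
      rw [← hu, ← Units.val_pow_eq_pow_val, h1, Units.val_one]
    have hpoly : (X : (ZMod p)[X]) ^ m = 1 := by
      apply hinj; rw [map_pow, map_one, hmapX]; exact this
    have := congrArg natDegree hpoly
    rw [natDegree_pow, natDegree_X, natDegree_one] at this
    omega
  have hXzinj : ∀ z1 z2 : ℤ,
      (RatFunc.X : RatFunc (ZMod p)) ^ z1 = RatFunc.X ^ z2 → z1 = z2 := by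
    intro z1 z2 hE
    apply huinj
    apply Units.ext
    show ((u ^ z1 : _) : RatFunc (ZMod p)) = ((u ^ z2 : _) : RatFunc (ZMod p))
    rw [Units.val_zpow_eq_zpow_val, Units.val_zpow_eq_zpow_val, hu]
    exact hE
  have hdesc : {g : (RatFunc (ZMod p))ˣ × (RatFunc (ZMod p))ˣ |
        g ∈ Subgroup.zpowers (u, v) ∧ (g.1 : RatFunc (ZMod p)) + (g.2 : RatFunc (ZMod p)) = 1}
      = {g | ∃ e : ℕ, (g.1 : RatFunc (ZMod p)) = RatFunc.X ^ p ^ e ∧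
            (g.2 : RatFunc (ZMod p)) = (1 - RatFunc.X) ^ p ^ e} := by
    ext g
    constructor
    · rintro ⟨hgΓ, hsum⟩
      obtain ⟨z, rfl⟩ := Subgroup.mem_zpowers_iff.mp hgΓ
      have hfst : (((u, v) ^ z).1 : RatFunc (ZMod p)) = RatFunc.X ^ z := by
        show ((u ^ z : _) : RatFunc (ZMod p)) = _
        rw [Units.val_zpow_eq_zpow_val, hu]
      have hsnd : (((u, v) ^ z).2 : RatFunc (ZMod p)) = (1 - RatFunc.X) ^ z := by
        show ((v ^ z : _) : RatFunc (ZMod p)) = _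
        rw [Units.val_zpow_eq_zpow_val, hv]
      rw [hfst, hsnd] at hsum
      obtain ⟨e, rfl⟩ := (ML_keyK z).mp hsum
      refine ⟨e, ?_, ?_⟩
      · rw [hfst]
        rw [show ((p:ℤ))^e = ((p^e : ℕ) : ℤ) by push_cast; ring, zpow_natCast]
      · rw [hsnd]
        rw [show ((p:ℤ))^e = ((p^e : ℕ) : ℤ) by push_cast; ring, zpow_natCast]
    · rintro ⟨e, h1, h2⟩
      have hg1 : g.1 = u ^ (p ^ e) := by
        apply Units.ext
        rw [Units.val_pow_eq_pow_val, hu]; exact h1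
      have hg2 : g.2 = v ^ (p ^ e) := by
        apply Units.ext
        rw [Units.val_pow_eq_pow_val, hv]; exact h2
      refine ⟨?_, ?_⟩
      · have hgeq : g = (u, v) ^ (p ^ e) := by
          apply Prod.ext
          · exact hg1
          · exact hg2
        exact Subgroup.mem_zpowers_iff.mpr ⟨(p ^ e : ℕ), by rw [zpow_natCast]; exact hgeq.symm⟩
      · rw [h1, h2, ← add_pow_char_pow]
        simp
  refine ⟨hdesc, ?_⟩
  rintro ⟨n, γ, H, hH, hγ, hcover⟩
  -- S is infinite
  have hSinf : Set.Infinite {g : (RatFunc (ZMod p))ˣ × (RatFunc (ZMod p))ˣ |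
        g ∈ Subgroup.zpowers (u, v) ∧ (g.1 : RatFunc (ZMod p)) + (g.2 : RatFunc (ZMod p)) = 1} := by
    apply Set.infinite_of_injective_forall_mem
      (f := fun e : ℕ => ((u, v) : (RatFunc (ZMod p))ˣ × (RatFunc (ZMod p))ˣ) ^ (p ^ e))
    · intro a b hab
      have : u ^ (p ^ a) = u ^ (p ^ b) := congrArg Prod.fst hab
      have h2 : u ^ ((p ^ a : ℕ) : ℤ) = u ^ ((p ^ b : ℕ) : ℤ) := by
        rw [zpow_natCast, zpow_natCast]; exact this
      have h3 : ((p ^ a : ℕ) : ℤ) = ((p ^ b : ℕ) : ℤ) := huinj h2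
      have h4 : p ^ a = p ^ b := by exact_mod_cast h3
      exact Nat.pow_right_injective hp2 h4
    · intro e
      rw [hdesc]
      refine ⟨e, ?_, ?_⟩
      · show ((u ^ (p ^ e) : _) : RatFunc (ZMod p)) = _
        rw [Units.val_pow_eq_pow_val, hu]
      · show ((v ^ (p ^ e) : _) : RatFunc (ZMod p)) = _
        rw [Units.val_pow_eq_pow_val, hv]
  have hexi : ∃ i, ((fun h => γ i * h) '' (H i : Set _)).Infinite := by
    by_contra hc
    push_neg at hc
    exact hSinf (hcover ▸ Set.finite_iUnion hc)
  obtain ⟨i, hIinf⟩ := hexi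
  have hHinf : (H i : Set _).Infinite := fun hfin => hIinf (hfin.image (fun h => γ i * h))
  obtain ⟨h, hhH, hne⟩ : ∃ h ∈ H i, h ≠ 1 := by
    by_contra hc
    push_neg at hc
    exact hHinf ((Set.finite_singleton 1).subset (fun x hx => hc x hx))
  obtain ⟨d, hd⟩ := Subgroup.mem_zpowers_iff.mp (hH i hhH)
  have hd0 : d ≠ 0 := by
    rintro rfl
    rw [zpow_zero] at hd
    exact hne hd.symm
  obtain ⟨a, hA⟩ := Subgroup.mem_zpowers_iff.mp (hγ i)
  set k : ℤ := -(|a| + 1) * d with hk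
  have hmem : γ i * h ^ k ∈ {g : (RatFunc (ZMod p))ˣ × (RatFunc (ZMod p))ˣ |
        g ∈ Subgroup.zpowers (u, v) ∧ (g.1 : RatFunc (ZMod p)) + (g.2 : RatFunc (ZMod p)) = 1} := by
    rw [hcover]
    exact Set.mem_iUnion.2 ⟨i, ⟨h ^ k, (H i).zpow_mem hhH k, rfl⟩⟩
  rw [hdesc] at hmem
  obtain ⟨e, he1, -⟩ := hmem
  have hprod : γ i * h ^ k = (u, v) ^ (a + d * k) := by
    rw [← hA, ← hd, ← zpow_mul, ← zpow_add]
  have hfst : ((γ i * h ^ k).1 : RatFunc (ZMod p)) = RatFunc.X ^ (a + d * k) := by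
    rw [hprod]
    show ((u ^ (a + d * k) : _) : RatFunc (ZMod p)) = _
    rw [Units.val_zpow_eq_zpow_val, hu]
  rw [hfst] at he1
  have he1' : RatFunc.X ^ (a + d * k) = (RatFunc.X : RatFunc (ZMod p)) ^ ((p ^ e : ℕ) : ℤ) := by
    rw [zpow_natCast]; exact he1
  have heq : a + d * k = ((p ^ e : ℕ) : ℤ) := hXzinj _ _ he1'
  have hpe : 1 ≤ ((p ^ e : ℕ) : ℤ) := by
    have : 1 ≤ p ^ e := Nat.one_le_pow _ _ (by omega)
    exact_mod_cast this
  have hd1 : 1 ≤ |d| := Int.one_le_abs hd0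
  have hd2 : 1 ≤ d ^ 2 := by nlinarith [sq_abs d]
  have : a + d * k = a - (|a| + 1) * d ^ 2 := by rw [hk]; ring
  nlinarith [le_abs_self a, abs_nonneg a]
end

section
/- Let (x₁(s), y₁(s)) = (ac₁ξ₁^s + γ₁, bc₁ξ₁^s + η₁s + b₁) and (x₂(s), y₂(s)) = (ac₂ξ₂^s + γ₂, bc₂ξ₂^s + η₂s + b₂) be two one-parameter exponential families in ℤ². If their intersection is infinite, then it contains a one-parameter exponential family, i.e., there exist integers w₁, u₁ and rationals such that the intersection contains {(ac₁ξ₁^{u₁}(ξ₁^{w₁})^s + γ₁, bc₁ξ₁^{u₁}(ξ₁^{w₁})^s + η₁w₁s + η₁u₁ + b₁) : s ∈ ℕ}. -/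
lemma exp_family_aux {A B : ℚ} {k m : ℕ} (hA : 2 ≤ A) (hAB : A + 1 ≤ B)
    (h2 : B ^ m ≤ 2 ^ k * A ^ m) (hm : 2 ^ k * A < (m : ℚ)) : False := by
  have hApos : (0:ℚ) < A := by linarith
  have hAmpos : (0:ℚ) < A ^ m := pow_pos hApos m
  have h1A : (0:ℚ) ≤ 1 / A := by positivity
  have hber : 1 + (m:ℚ) * (1 / A) ≤ (1 + 1 / A) ^ m :=
    one_add_mul_le_pow (by linarith) m
  have haq1 : A * (1 + 1 / A) = A + 1 := by field_simp
  have hge : (A + 1) ^ m ≤ B ^ m := pow_le_pow_left₀ (by linarith) hAB m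
  have hchain : A ^ m * (1 + (m:ℚ) * (1 / A)) ≤ B ^ m := by
    calc A ^ m * (1 + (m:ℚ) * (1 / A)) ≤ A ^ m * (1 + 1 / A) ^ m :=
          mul_le_mul_of_nonneg_left hber (le_of_lt hAmpos)
      _ = (A * (1 + 1 / A)) ^ m := (mul_pow _ _ _).symm
      _ = (A + 1) ^ m := by rw [haq1]
      _ ≤ B ^ m := hge
  have hdiv : (2:ℚ) ^ k < (m:ℚ) * (1 / A) := by
    rw [mul_one_div, lt_div_iff₀ hApos]
    linarith
  have hmid : 2 ^ k * A ^ m < A ^ m * (1 + (m:ℚ) * (1 / A)) := by nlinarith [hdiv, hAmpos]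
  linarith


set_option maxHeartbeats 2000000 in
/-- If the intersection of two one-parameter exponential families in `ℤ²` is
infinite, then it contains a one-parameter exponential family. -/
theorem exp_family_inter_exp_family (a b η₁ η₂ ξ₁ ξ₂ : ℤ)
    (c₁ c₂ γ₁ γ₂ b₁ b₂ : ℚ)
    (ha : a ≠ 0) (hb : b ≠ 0) (hη₁ : η₁ ≠ 0) (hη₂ : η₂ ≠ 0)
    (hξ₁ : 1 < ξ₁) (hξ₂ : 1 < ξ₂) (hc₁ : c₁ ≠ 0) (hc₂ : c₂ ≠ 0)
    (E₁ E₂ : Set (ℤ × ℤ))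
    (hE₁ : E₁ = {x | ∃ s : ℕ, 1 ≤ s ∧
        (x.1 : ℚ) = (a : ℚ) * c₁ * (ξ₁ : ℚ) ^ s + γ₁ ∧
        (x.2 : ℚ) = (b : ℚ) * c₁ * (ξ₁ : ℚ) ^ s + (η₁ : ℚ) * s + b₁})
    (hE₂ : E₂ = {x | ∃ s : ℕ, 1 ≤ s ∧
        (x.1 : ℚ) = (a : ℚ) * c₂ * (ξ₂ : ℚ) ^ s + γ₂ ∧
        (x.2 : ℚ) = (b : ℚ) * c₂ * (ξ₂ : ℚ) ^ s + (η₂ : ℚ) * s + b₂})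
    (hinf : (E₁ ∩ E₂).Infinite) :
    ∃ w₁ u₁ : ℕ, 1 ≤ w₁ ∧
      {x : ℤ × ℤ | ∃ s : ℕ, 1 ≤ s ∧
        (x.1 : ℚ) = (a : ℚ) * c₁ * (ξ₁ : ℚ) ^ u₁ * ((ξ₁ : ℚ) ^ w₁) ^ s + γ₁ ∧
        (x.2 : ℚ) = (b : ℚ) * c₁ * (ξ₁ : ℚ) ^ u₁ * ((ξ₁ : ℚ) ^ w₁) ^ s +
          (η₁ : ℚ) * (w₁ * s : ℕ) + (η₁ : ℚ) * u₁ + b₁} ⊆ E₁ ∩ E₂ := by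
  classical
  have hξ₁Q : (1:ℚ) < (ξ₁:ℚ) := by exact_mod_cast hξ₁
  have hξ₂Q : (1:ℚ) < (ξ₂:ℚ) := by exact_mod_cast hξ₂
  have hξ₁Q2 : (2:ℚ) ≤ (ξ₁:ℚ) := by exact_mod_cast hξ₁
  have hξ₂Q2 : (2:ℚ) ≤ (ξ₂:ℚ) := by exact_mod_cast hξ₂
  have haQ : (a:ℚ) ≠ 0 := Int.cast_ne_zero.mpr ha
  have hbQ : (b:ℚ) ≠ 0 := Int.cast_ne_zero.mpr hb
  -- the set of parameters of E₁-points that also lie in E₂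
  set T : Set ℕ := {t | 1 ≤ t ∧ ∃ σ : ℕ, 1 ≤ σ ∧
      (a:ℚ) * c₁ * (ξ₁:ℚ) ^ t + γ₁ = (a:ℚ) * c₂ * (ξ₂:ℚ) ^ σ + γ₂ ∧
      (b:ℚ) * c₁ * (ξ₁:ℚ) ^ t + (η₁:ℚ) * t + b₁
        = (b:ℚ) * c₂ * (ξ₂:ℚ) ^ σ + (η₂:ℚ) * σ + b₂} with hTdef
  have key : ∀ p : ℤ × ℤ, p ∈ E₁ ∩ E₂ → ∃ t, t ∈ T ∧
      (p.1 : ℚ) = (a:ℚ) * c₁ * (ξ₁:ℚ) ^ t + γ₁ ∧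
      (p.2 : ℚ) = (b:ℚ) * c₁ * (ξ₁:ℚ) ^ t + (η₁:ℚ) * t + b₁ := by
    intro p hp
    obtain ⟨hp1, hp2⟩ := hp
    rw [hE₁] at hp1
    rw [hE₂] at hp2
    obtain ⟨s, hs1, hsx, hsy⟩ := hp1
    obtain ⟨σ, hσ1, hσx, hσy⟩ := hp2
    exact ⟨s, ⟨hs1, σ, hσ1, by rw [← hsx, hσx], by rw [← hsy, hσy]⟩, hsx, hsy⟩
  have hTinf : T.Infinite := by
    set F : ℤ × ℤ → ℕ := fun p => if h : p ∈ E₁ ∩ E₂ then (key p h).choose else 0 with hF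
    have hFmem : ∀ p (h : p ∈ E₁ ∩ E₂), F p ∈ T ∧
        (p.1 : ℚ) = (a:ℚ) * c₁ * (ξ₁:ℚ) ^ (F p) + γ₁ ∧
        (p.2 : ℚ) = (b:ℚ) * c₁ * (ξ₁:ℚ) ^ (F p) + (η₁:ℚ) * (F p) + b₁ := by
      intro p h
      simp only [hF, dif_pos h]
      exact (key p h).choose_spec
    have hinj : Set.InjOn F (E₁ ∩ E₂) := by
      intro p hp q hq hpq
      have h1 := hFmem p hp
      have h2 := hFmem q hq
      rw [hpq] at h1
      have e1 : (p.1 : ℚ) = (q.1 : ℚ) := by rw [h1.2.1, h2.2.1]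
      have e2 : (p.2 : ℚ) = (q.2 : ℚ) := by rw [h1.2.2, h2.2.2]
      have : p.1 = q.1 := by exact_mod_cast e1
      have : p.2 = q.2 := by exact_mod_cast e2
      exact Prod.ext ‹p.1 = q.1› ‹p.2 = q.2›
    exact Set.Infinite.mono (fun t ht => by
        obtain ⟨p, hp, rfl⟩ := ht
        exact (hFmem p hp).1) (hinf.image hinj)
  -- the parameter of the second family, as a function
  set S : ℕ → ℕ := fun t => if h : t ∈ T then h.2.choose else 0 with hSdef
  have hS : ∀ t (h : t ∈ T), 1 ≤ S t ∧
      (a:ℚ) * c₁ * (ξ₁:ℚ) ^ t + γ₁ = (a:ℚ) * c₂ * (ξ₂:ℚ) ^ (S t) + γ₂ ∧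
      (b:ℚ) * c₁ * (ξ₁:ℚ) ^ t + (η₁:ℚ) * t + b₁
        = (b:ℚ) * c₂ * (ξ₂:ℚ) ^ (S t) + (η₂:ℚ) * (S t) + b₂ := by
    intro t h
    simp only [hSdef, dif_pos h]
    exact h.2.choose_spec
  -- pair relations
  have pairx : ∀ t ∈ T, ∀ t' ∈ T,
      c₁ * ((ξ₁:ℚ) ^ t' - (ξ₁:ℚ) ^ t) = c₂ * ((ξ₂:ℚ) ^ (S t') - (ξ₂:ℚ) ^ (S t)) := by
    intro t ht t' ht'
    have h1 := (hS t ht).2.1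
    have h2 := (hS t' ht').2.1
    have h3 : (a:ℚ) * (c₁ * ((ξ₁:ℚ) ^ t' - (ξ₁:ℚ) ^ t))
        = (a:ℚ) * (c₂ * ((ξ₂:ℚ) ^ (S t') - (ξ₂:ℚ) ^ (S t))) := by
      linear_combination h2 - h1
    exact mul_left_cancel₀ haQ h3
  have pairy : ∀ t ∈ T, ∀ t' ∈ T,
      (η₂:ℚ) * ((S t' : ℚ) - (S t : ℚ)) = (η₁:ℚ) * ((t' : ℚ) - (t : ℚ)) := by
    intro t ht t' ht'
    have h1 := (hS t ht).2.2
    have h2 := (hS t' ht').2.2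
    have hx := pairx t ht t' ht'
    linear_combination h1 - h2 + (b:ℚ) * hx
  -- η₁ and η₂ have the same sign
  have hηpos : 0 < η₁ * η₂ := by
    rcases lt_trichotomy (η₁ * η₂) 0 with hneg | hzero | hpos
    · exfalso
      obtain ⟨t₀, ht₀⟩ := hTinf.nonempty
      obtain ⟨t', ht', hgt⟩ := hTinf.exists_gt (t₀ + (η₂ ^ 2 * (S t₀ : ℤ)).toNat)
      have hy := pairy t₀ ht₀ t' ht'
      have hyZ : η₂ * ((S t' : ℤ) - (S t₀ : ℤ)) = η₁ * ((t' : ℤ) - (t₀ : ℤ)) := by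
        exact_mod_cast hy
      have h1 : η₁ * η₂ ≤ -1 := by omega
      have h2 : (t' : ℤ) - t₀ > η₂ ^ 2 * (S t₀ : ℤ) := by
        have := Int.self_le_toNat (η₂ ^ 2 * (S t₀ : ℤ))
        omega
      have h3 : η₂ ^ 2 * (S t' : ℤ) = η₂ ^ 2 * (S t₀ : ℤ) + (η₁ * η₂) * ((t' : ℤ) - t₀) := by
        linear_combination η₂ * hyZ
      have h4 : (0:ℤ) ≤ η₂ ^ 2 * (S t' : ℤ) := by positivity
      have h0 : (0:ℤ) ≤ η₂ ^ 2 * (S t₀ : ℤ) := by positivity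
      have hD : (0:ℤ) < (t' : ℤ) - t₀ := by omega
      have h5 : (η₁ * η₂) * ((t' : ℤ) - t₀) ≤ -((t' : ℤ) - t₀) := by nlinarith
      linarith
    · exact absurd (mul_eq_zero.mp hzero) (by push_neg; exact ⟨hη₁, hη₂⟩)
    · exact hpos
  -- S is strictly monotone on T
  have hSmono : ∀ t ∈ T, ∀ t' ∈ T, t < t' → S t < S t' := by
    intro t ht t' ht' hlt
    have hy := pairy t ht t' ht'
    have hyZ : η₂ * ((S t' : ℤ) - (S t : ℤ)) = η₁ * ((t' : ℤ) - (t : ℤ)) := by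
      exact_mod_cast hy
    have h2 : η₂ ^ 2 * ((S t' : ℤ) - (S t : ℤ)) = (η₁ * η₂) * ((t' : ℤ) - t) := by
      linear_combination η₂ * hyZ
    have h3 : (0:ℤ) < (η₁ * η₂) * ((t' : ℤ) - t) := by
      apply mul_pos hηpos
      omega
    have h4 : (0:ℤ) < η₂ ^ 2 := by positivity
    have h5 : (S t : ℤ) < (S t' : ℤ) := by nlinarith
    exact_mod_cast h5
  -- natAbs quantities
  have hη₁' : 0 < η₁.natAbs := Int.natAbs_pos.mpr hη₁
  have hη₂' : 0 < η₂.natAbs := Int.natAbs_pos.mpr hη₂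
  have pairn : ∀ t ∈ T, ∀ t' ∈ T, t < t' →
      η₂.natAbs * (S t' - S t) = η₁.natAbs * (t' - t) := by
    intro t ht t' ht' hlt
    have hσ := hSmono t ht t' ht' hlt
    have hy := pairy t ht t' ht'
    have hyZ : η₂ * ((S t' : ℤ) - (S t : ℤ)) = η₁ * ((t' : ℤ) - (t : ℤ)) := by
      exact_mod_cast hy
    have hZ : η₂ * ((S t' - S t : ℕ) : ℤ) = η₁ * ((t' - t : ℕ) : ℤ) := by
      rw [Nat.cast_sub hσ.le, Nat.cast_sub hlt.le]; exact hyZ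
    have := congrArg Int.natAbs hZ
    simpa [Int.natAbs_mul] using this
  -- choose three points of T
  obtain ⟨t₀, ht₀⟩ := hTinf.nonempty
  obtain ⟨t₁, ht₁, h01⟩ := hTinf.exists_gt t₀
  obtain ⟨t₂, ht₂, h12K⟩ := hTinf.exists_gt (t₁ + 2 ^ η₂.natAbs * (ξ₁.toNat ^ η₂.natAbs + ξ₂.toNat ^ η₁.natAbs))
  have h12 : t₁ < t₂ := by omega
  have hσ01 : S t₀ < S t₁ := hSmono t₀ ht₀ t₁ ht₁ h01
  have hσ12 : S t₁ < S t₂ := hSmono t₁ ht₁ t₂ ht₂ h12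
  have h1 := pairx t₀ ht₀ t₁ ht₁
  have h2 := pairx t₀ ht₀ t₂ ht₂
  have hXY : ((ξ₁:ℚ) ^ t₁ - (ξ₁:ℚ) ^ t₀) * ((ξ₂:ℚ) ^ S t₂ - (ξ₂:ℚ) ^ S t₀)
      = ((ξ₁:ℚ) ^ t₂ - (ξ₁:ℚ) ^ t₀) * ((ξ₂:ℚ) ^ S t₁ - (ξ₂:ℚ) ^ S t₀) :=
    mul_left_cancel₀ hc₁ (by
      linear_combination ((ξ₂:ℚ) ^ S t₂ - (ξ₂:ℚ) ^ S t₀) * h1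
        - ((ξ₂:ℚ) ^ S t₁ - (ξ₂:ℚ) ^ S t₀) * h2)
  set m : ℕ := t₂ - t₁ with hm
  set n : ℕ := S t₂ - S t₁ with hn
  -- positivity facts
  have hx10 : (ξ₁:ℚ) ^ t₀ < (ξ₁:ℚ) ^ t₁ := pow_lt_pow_right₀ hξ₁Q h01
  have hx20 : (ξ₁:ℚ) ^ t₀ < (ξ₁:ℚ) ^ t₂ := pow_lt_pow_right₀ hξ₁Q (by omega)
  have hy10 : (ξ₂:ℚ) ^ S t₀ < (ξ₂:ℚ) ^ S t₁ := pow_lt_pow_right₀ hξ₂Q hσ01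
  have hy20 : (ξ₂:ℚ) ^ S t₀ < (ξ₂:ℚ) ^ S t₂ := pow_lt_pow_right₀ hξ₂Q (by omega)
  have hξ₁pos : (0:ℚ) < (ξ₁:ℚ) := by linarith
  have hξ₂pos : (0:ℚ) < (ξ₂:ℚ) := by linarith
  -- the four bounds
  have lbx : (ξ₁:ℚ) ^ m * ((ξ₁:ℚ) ^ t₁ - (ξ₁:ℚ) ^ t₀) ≤ (ξ₁:ℚ) ^ t₂ - (ξ₁:ℚ) ^ t₀ := by
    have e : (ξ₁:ℚ) ^ m * (ξ₁:ℚ) ^ t₁ = (ξ₁:ℚ) ^ t₂ := by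
      rw [← pow_add]; congr 1; omega
    have e2 : (ξ₁:ℚ) ^ t₀ ≤ (ξ₁:ℚ) ^ m * (ξ₁:ℚ) ^ t₀ :=
      le_mul_of_one_le_left (by positivity) (one_le_pow₀ (le_of_lt hξ₁Q))
    nlinarith [e, e2]
  have lby : (ξ₂:ℚ) ^ n * ((ξ₂:ℚ) ^ S t₁ - (ξ₂:ℚ) ^ S t₀) ≤ (ξ₂:ℚ) ^ S t₂ - (ξ₂:ℚ) ^ S t₀ := by
    have e : (ξ₂:ℚ) ^ n * (ξ₂:ℚ) ^ S t₁ = (ξ₂:ℚ) ^ S t₂ := by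
      rw [← pow_add]; congr 1; omega
    have e2 : (ξ₂:ℚ) ^ S t₀ ≤ (ξ₂:ℚ) ^ n * (ξ₂:ℚ) ^ S t₀ :=
      le_mul_of_one_le_left (by positivity) (one_le_pow₀ (le_of_lt hξ₂Q))
    nlinarith [e, e2]
  have ubx : (ξ₁:ℚ) ^ t₂ - (ξ₁:ℚ) ^ t₀ ≤ (ξ₁:ℚ) ^ m * (2 * ((ξ₁:ℚ) ^ t₁ - (ξ₁:ℚ) ^ t₀)) := by
    have e : (ξ₁:ℚ) ^ m * (ξ₁:ℚ) ^ t₁ = (ξ₁:ℚ) ^ t₂ := by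
      rw [← pow_add]; congr 1; omega
    have hhalf : 2 * (ξ₁:ℚ) ^ t₀ ≤ (ξ₁:ℚ) ^ t₁ := by
      calc 2 * (ξ₁:ℚ) ^ t₀ ≤ (ξ₁:ℚ) * (ξ₁:ℚ) ^ t₀ :=
            mul_le_mul_of_nonneg_right hξ₁Q2 (by positivity)
        _ = (ξ₁:ℚ) ^ (t₀ + 1) := by rw [pow_succ]; ring
        _ ≤ (ξ₁:ℚ) ^ t₁ := pow_le_pow_right₀ (le_of_lt hξ₁Q) (by omega)
    have f : (ξ₁:ℚ) ^ m * (2 * (ξ₁:ℚ) ^ t₀) ≤ (ξ₁:ℚ) ^ m * (ξ₁:ℚ) ^ t₁ :=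
      mul_le_mul_of_nonneg_left hhalf (by positivity)
    have hp : (0:ℚ) < (ξ₁:ℚ) ^ t₀ := by positivity
    nlinarith [e, f, hp]
  have uby : (ξ₂:ℚ) ^ S t₂ - (ξ₂:ℚ) ^ S t₀ ≤ (ξ₂:ℚ) ^ n * (2 * ((ξ₂:ℚ) ^ S t₁ - (ξ₂:ℚ) ^ S t₀)) := by
    have e : (ξ₂:ℚ) ^ n * (ξ₂:ℚ) ^ S t₁ = (ξ₂:ℚ) ^ S t₂ := by
      rw [← pow_add]; congr 1; omega
    have hhalf : 2 * (ξ₂:ℚ) ^ S t₀ ≤ (ξ₂:ℚ) ^ S t₁ := by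
      calc 2 * (ξ₂:ℚ) ^ S t₀ ≤ (ξ₂:ℚ) * (ξ₂:ℚ) ^ S t₀ :=
            mul_le_mul_of_nonneg_right hξ₂Q2 (by positivity)
        _ = (ξ₂:ℚ) ^ (S t₀ + 1) := by rw [pow_succ]; ring
        _ ≤ (ξ₂:ℚ) ^ S t₁ := pow_le_pow_right₀ (le_of_lt hξ₂Q) (by omega)
    have f : (ξ₂:ℚ) ^ n * (2 * (ξ₂:ℚ) ^ S t₀) ≤ (ξ₂:ℚ) ^ n * (ξ₂:ℚ) ^ S t₁ :=
      mul_le_mul_of_nonneg_left hhalf (by positivity)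
    have hp : (0:ℚ) < (ξ₂:ℚ) ^ S t₀ := by positivity
    nlinarith [e, f, hp]
  -- the two comparisons
  have hPpos : (0:ℚ) < ((ξ₁:ℚ) ^ t₁ - (ξ₁:ℚ) ^ t₀) * ((ξ₂:ℚ) ^ S t₁ - (ξ₂:ℚ) ^ S t₀) :=
    mul_pos (by linarith) (by linarith)
  have cmp1 : (ξ₁:ℚ) ^ m ≤ 2 * (ξ₂:ℚ) ^ n := by
    have i1 := mul_le_mul_of_nonneg_right lbx (le_of_lt (show (0:ℚ) < (ξ₂:ℚ) ^ S t₁ - (ξ₂:ℚ) ^ S t₀ by linarith))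
    have i2 := mul_le_mul_of_nonneg_left uby (le_of_lt (show (0:ℚ) < (ξ₁:ℚ) ^ t₁ - (ξ₁:ℚ) ^ t₀ by linarith))
    have key2 : (ξ₁:ℚ) ^ m * (((ξ₁:ℚ) ^ t₁ - (ξ₁:ℚ) ^ t₀) * ((ξ₂:ℚ) ^ S t₁ - (ξ₂:ℚ) ^ S t₀))
        ≤ (2 * (ξ₂:ℚ) ^ n) * (((ξ₁:ℚ) ^ t₁ - (ξ₁:ℚ) ^ t₀) * ((ξ₂:ℚ) ^ S t₁ - (ξ₂:ℚ) ^ S t₀)) := by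
      nlinarith [i1, i2, hXY]
    exact le_of_mul_le_mul_right key2 hPpos
  have cmp2 : (ξ₂:ℚ) ^ n ≤ 2 * (ξ₁:ℚ) ^ m := by
    have i1 := mul_le_mul_of_nonneg_left lby (le_of_lt (show (0:ℚ) < (ξ₁:ℚ) ^ t₁ - (ξ₁:ℚ) ^ t₀ by linarith))
    have i2 := mul_le_mul_of_nonneg_right ubx (le_of_lt (show (0:ℚ) < (ξ₂:ℚ) ^ S t₁ - (ξ₂:ℚ) ^ S t₀ by linarith))
    have key2 : (ξ₂:ℚ) ^ n * (((ξ₁:ℚ) ^ t₁ - (ξ₁:ℚ) ^ t₀) * ((ξ₂:ℚ) ^ S t₁ - (ξ₂:ℚ) ^ S t₀))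
        ≤ (2 * (ξ₁:ℚ) ^ m) * (((ξ₁:ℚ) ^ t₁ - (ξ₁:ℚ) ^ t₀) * ((ξ₂:ℚ) ^ S t₁ - (ξ₂:ℚ) ^ S t₀)) := by
      nlinarith [i1, i2, hXY]
    exact le_of_mul_le_mul_right key2 hPpos
  -- exponent relation on the gap
  have hmn : η₂.natAbs * n = η₁.natAbs * m := pairn t₁ ht₁ t₂ ht₂ h12
  -- raise the comparisons to power η₂.natAbs
  have powm1 : ((ξ₁:ℚ) ^ η₂.natAbs) ^ m ≤ 2 ^ η₂.natAbs * ((ξ₂:ℚ) ^ η₁.natAbs) ^ m := by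
    have := pow_le_pow_left₀ (by positivity : (0:ℚ) ≤ (ξ₁:ℚ) ^ m) cmp1 η₂.natAbs
    calc ((ξ₁:ℚ) ^ η₂.natAbs) ^ m = ((ξ₁:ℚ) ^ m) ^ η₂.natAbs := by
          rw [← pow_mul, ← pow_mul, Nat.mul_comm]
      _ ≤ (2 * (ξ₂:ℚ) ^ n) ^ η₂.natAbs := this
      _ = 2 ^ η₂.natAbs * ((ξ₂:ℚ) ^ η₁.natAbs) ^ m := by
          rw [mul_pow, ← pow_mul, ← pow_mul]
          congr 2
          exact (Nat.mul_comm n η₂.natAbs).trans hmn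
  have powm2 : ((ξ₂:ℚ) ^ η₁.natAbs) ^ m ≤ 2 ^ η₂.natAbs * ((ξ₁:ℚ) ^ η₂.natAbs) ^ m := by
    have := pow_le_pow_left₀ (by positivity : (0:ℚ) ≤ (ξ₂:ℚ) ^ n) cmp2 η₂.natAbs
    calc ((ξ₂:ℚ) ^ η₁.natAbs) ^ m = ((ξ₂:ℚ) ^ n) ^ η₂.natAbs := by
          rw [← pow_mul, ← pow_mul]
          congr 1
          exact hmn.symm.trans (Nat.mul_comm η₂.natAbs n)
      _ ≤ (2 * (ξ₁:ℚ) ^ m) ^ η₂.natAbs := this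
      _ = 2 ^ η₂.natAbs * ((ξ₁:ℚ) ^ η₂.natAbs) ^ m := by
          rw [mul_pow, ← pow_mul, ← pow_mul, Nat.mul_comm]
  -- basic size facts
  have hAq2 : (2:ℚ) ≤ (ξ₁:ℚ) ^ η₂.natAbs := by
    calc (2:ℚ) = 2 ^ 1 := (pow_one 2).symm
      _ ≤ 2 ^ η₂.natAbs := pow_le_pow_right₀ (by norm_num) hη₂'
      _ ≤ (ξ₁:ℚ) ^ η₂.natAbs := pow_le_pow_left₀ (by norm_num) hξ₁Q2 _
  have hBq2 : (2:ℚ) ≤ (ξ₂:ℚ) ^ η₁.natAbs := by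
    calc (2:ℚ) = 2 ^ 1 := (pow_one 2).symm
      _ ≤ 2 ^ η₁.natAbs := pow_le_pow_right₀ (by norm_num) hη₁'
      _ ≤ (ξ₂:ℚ) ^ η₁.natAbs := pow_le_pow_left₀ (by norm_num) hξ₂Q2 _
  have hcast₁ : ((ξ₁.toNat : ℚ)) = (ξ₁:ℚ) := by
    rw [← Int.cast_natCast, Int.toNat_of_nonneg (by omega)]
  have hcast₂ : ((ξ₂.toNat : ℚ)) = (ξ₂:ℚ) := by
    rw [← Int.cast_natCast, Int.toNat_of_nonneg (by omega)]
  have hmbig : 2 ^ η₂.natAbs * ((ξ₁:ℚ) ^ η₂.natAbs + (ξ₂:ℚ) ^ η₁.natAbs) < (m:ℚ) := by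
    have h0 : (2:ℚ) ^ η₂.natAbs * ((ξ₁:ℚ) ^ η₂.natAbs + (ξ₂:ℚ) ^ η₁.natAbs)
        = ((2 ^ η₂.natAbs * (ξ₁.toNat ^ η₂.natAbs + ξ₂.toNat ^ η₁.natAbs) : ℕ) : ℚ) := by
      push_cast [hcast₁, hcast₂]
      ring
    rw [h0]
    exact_mod_cast (by omega : 2 ^ η₂.natAbs * (ξ₁.toNat ^ η₂.natAbs + ξ₂.toNat ^ η₁.natAbs) < m)
  -- the bases are multiplicatively dependent
  have habs : (ξ₁:ℚ) ^ η₂.natAbs = (ξ₂:ℚ) ^ η₁.natAbs := by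
    rcases lt_trichotomy ((ξ₁:ℚ) ^ η₂.natAbs) ((ξ₂:ℚ) ^ η₁.natAbs) with h | h | h
    · exfalso
      have hZ : (ξ₁ ^ η₂.natAbs : ℤ) < ξ₂ ^ η₁.natAbs := by exact_mod_cast h
      have hAB : (ξ₁:ℚ) ^ η₂.natAbs + 1 ≤ (ξ₂:ℚ) ^ η₁.natAbs := by
        exact_mod_cast (by omega : (ξ₁ ^ η₂.natAbs : ℤ) + 1 ≤ ξ₂ ^ η₁.natAbs)
      have hBqpos : (0:ℚ) < (ξ₂:ℚ) ^ η₁.natAbs := by positivity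
      exact exp_family_aux hAq2 hAB powm2 (by nlinarith [hmbig, hBqpos])
    · exact h
    · exfalso
      have hZ : (ξ₂ ^ η₁.natAbs : ℤ) < ξ₁ ^ η₂.natAbs := by exact_mod_cast h
      have hAB : (ξ₂:ℚ) ^ η₁.natAbs + 1 ≤ (ξ₁:ℚ) ^ η₂.natAbs := by
        exact_mod_cast (by omega : (ξ₂ ^ η₁.natAbs : ℤ) + 1 ≤ ξ₁ ^ η₂.natAbs)
      have hAqpos : (0:ℚ) < (ξ₁:ℚ) ^ η₂.natAbs := by positivity
      exact exp_family_aux hBq2 hAB powm1 (by nlinarith [hmbig, hAqpos])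
  -- the chosen period
  set Δ : ℕ := t₁ - t₀ with hΔ
  set δ : ℕ := S t₁ - S t₀ with hδ
  have hΔpos : 0 < Δ := by omega
  have hδpos : 0 < δ := by omega
  have hΔδ : η₂.natAbs * δ = η₁.natAbs * Δ := pairn t₀ ht₀ t₁ ht₁ h01
  have hW : (ξ₁:ℚ) ^ Δ = (ξ₂:ℚ) ^ δ := by
    have hp : (((ξ₁:ℚ) ^ Δ)) ^ η₂.natAbs = (((ξ₂:ℚ) ^ δ)) ^ η₂.natAbs := by
      calc ((ξ₁:ℚ) ^ Δ) ^ η₂.natAbs = ((ξ₁:ℚ) ^ η₂.natAbs) ^ Δ := by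
            rw [← pow_mul, ← pow_mul, Nat.mul_comm]
        _ = ((ξ₂:ℚ) ^ η₁.natAbs) ^ Δ := by rw [habs]
        _ = ((ξ₂:ℚ) ^ δ) ^ η₂.natAbs := by
            rw [← pow_mul, ← pow_mul]
            congr 1
            exact hΔδ.symm.trans (Nat.mul_comm η₂.natAbs δ)
    rcases lt_trichotomy ((ξ₁:ℚ) ^ Δ) ((ξ₂:ℚ) ^ δ) with h | h | h
    · exact absurd hp (ne_of_lt (pow_lt_pow_left₀ h (by positivity) (by omega)))
    · exact h
    · exact absurd hp.symm (ne_of_lt (pow_lt_pow_left₀ h (by positivity) (by omega)))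
  -- the leading coefficients agree
  have hWgt1 : (1:ℚ) < (ξ₁:ℚ) ^ Δ := one_lt_pow₀ hξ₁Q (by omega)
  have et : (ξ₁:ℚ) ^ t₀ * (ξ₁:ℚ) ^ Δ = (ξ₁:ℚ) ^ t₁ := by
    rw [← pow_add]; congr 1; omega
  have es : (ξ₂:ℚ) ^ S t₀ * (ξ₂:ℚ) ^ δ = (ξ₂:ℚ) ^ S t₁ := by
    rw [← pow_add]; congr 1; omega
  have h11 : c₁ * (ξ₁:ℚ) ^ t₀ = c₂ * (ξ₂:ℚ) ^ S t₀ := by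
    have hcc : c₁ * (ξ₁:ℚ) ^ t₀ * ((ξ₁:ℚ) ^ Δ - 1) = c₂ * (ξ₂:ℚ) ^ S t₀ * ((ξ₁:ℚ) ^ Δ - 1) := by
      linear_combination h1 + c₁ * et - c₂ * es - c₂ * (ξ₂:ℚ) ^ S t₀ * hW
    exact mul_right_cancel₀ (sub_ne_zero_of_ne (ne_of_gt hWgt1)) hcc
  have hγ : γ₁ = γ₂ := by
    linear_combination (hS t₀ ht₀).2.1 - (a:ℚ) * h11
  have hyb : (η₁:ℚ) * t₀ + b₁ = (η₂:ℚ) * (S t₀) + b₂ := by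
    linear_combination (hS t₀ ht₀).2.2 - (b:ℚ) * h11
  have hδQ : (η₂:ℚ) * (δ:ℚ) = (η₁:ℚ) * (Δ:ℚ) := by
    have hy := pairy t₀ ht₀ t₁ ht₁
    have e1 : ((δ:ℕ):ℚ) = (S t₁ : ℚ) - (S t₀ : ℚ) := by
      rw [hδ]; push_cast [Nat.cast_sub hσ01.le]; ring
    have e2 : ((Δ:ℕ):ℚ) = (t₁ : ℚ) - (t₀ : ℚ) := by
      rw [hΔ]; push_cast [Nat.cast_sub h01.le]; ring
    rw [e1, e2]; exact hy
  -- conclusion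
  refine ⟨Δ, t₀, by omega, ?_⟩
  rintro x ⟨s, hs, hx1, hx2⟩
  have hσ₀1 : 1 ≤ S t₀ := (hS t₀ ht₀).1
  have ht₀1 : 1 ≤ t₀ := ht₀.1
  constructor
  · rw [hE₁]
    refine ⟨t₀ + Δ * s, by omega, ?_, ?_⟩
    · rw [hx1, pow_add, pow_mul]; push_cast; ring
    · rw [hx2, pow_add, pow_mul]; push_cast; ring
  · rw [hE₂]
    refine ⟨S t₀ + δ * s, by omega, ?_, ?_⟩
    · rw [hx1, pow_add, pow_mul, ← hW]
      linear_combination ((a:ℚ) * ((ξ₁:ℚ) ^ Δ) ^ s) * h11 + hγ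
    · rw [hx2, pow_add, pow_mul, ← hW]
      push_cast
      linear_combination ((b:ℚ) * ((ξ₁:ℚ) ^ Δ) ^ s) * h11 + hyb - (s:ℚ) * hδQ
end

section
/- Let q be a power of a prime p. Let S₁ = {c₀ + c₁q^{f} : f ∈ ℕ₀} and S₂ = {d₀ + d₁q^{g} : g ∈ ℕ₀} be elementary p-nested sets of order 1 in ℤ with c₁, d₁ ≠ 0. Then S₁ ∩ S₂ is a finite union of singletons and elementary p-nested sets of order at most 1. -/
/-- `S ⊆ ℤ` is an elementary `p`-nested set of order at most 1 (with base `q`):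
`S = {c₀ + c₁ q^f : f ∈ ℕ}` with `(q-1)cᵢ ∈ ℤ` and `c₀ + c₁ ∈ ℤ`. -/
def IsElemNestedOne (q : ℕ) (S : Set ℤ) : Prop :=
  ∃ c₀ c₁ : ℚ,
    (∃ z : ℤ, ((q : ℚ) - 1) * c₀ = z) ∧ (∃ z : ℤ, ((q : ℚ) - 1) * c₁ = z) ∧
    (∃ z : ℤ, c₀ + c₁ = z) ∧
    S = {n : ℤ | ∃ f : ℕ, (n : ℚ) = c₀ + c₁ * (q : ℚ) ^ f}

/-!
If `c₀ = d₀`, a common point `c₀ + c₁ q^f = c₀ + d₁ q^g` forces `c₁ = d₁ q^(g-f)` or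
`d₁ = c₁ q^(f-g)`, so one set contains the other and the intersection is one of them.
If `c₀ ≠ d₀`, multiplying by `q - 1` turns a common point into an integer equation
`a₁ q^f = C + b₁ q^g` with `C ≠ 0`; then `q^(min f g)` divides `C`, which bounds `min f g`,
and comparing absolute values bounds `max f g`, so the intersection is finite.
-/

theorem Set.Finite.exists_eq_iUnion_fin_singleton {α : Type*} {s : Set α} (hs : s.Finite) :
    ∃ (m : ℕ) (T : Fin m → Set α), (∀ i, ∃ z, T i = {z}) ∧ s = ⋃ i, T i := by
  obtain ⟨m, u, -, rfl⟩ := hs.fin_param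
  exact ⟨m, fun i => {u i}, fun i => ⟨u i, rfl⟩, (Set.iUnion_singleton_eq_range u).symm⟩

theorem eq_mul_pow_sub_of_mul_pow_eq {K : Type*} [CommGroupWithZero K] {x y r : K} {f g : ℕ}
    (hr : r ≠ 0) (h : x * r ^ f = y * r ^ g) (hfg : f ≤ g) : x = y * r ^ (g - f) := by
  apply mul_right_cancel₀ (pow_ne_zero f hr)
  rw [h, mul_assoc, pow_sub_mul_pow r hfg]

def affinePowers (q : ℕ) (c₀ c₁ : ℚ) : Set ℤ :=
  {n : ℤ | ∃ f : ℕ, (n : ℚ) = c₀ + c₁ * (q : ℚ) ^ f}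

section SameConstant

variable {q : ℕ} {c₀ c₁ d₁ : ℚ}

theorem affinePowers_subset_of_eq_mul_pow {k : ℕ} (h : c₁ = d₁ * (q : ℚ) ^ k) :
    affinePowers q c₀ c₁ ⊆ affinePowers q c₀ d₁ := by
  rintro n ⟨f, hf⟩
  exact ⟨f + k, by rw [hf, h]; ring⟩

theorem affinePowers_inter_eq_empty_or_subset_or_subset (hq : q ≠ 0) :
    affinePowers q c₀ c₁ ∩ affinePowers q c₀ d₁ = ∅ ∨
      affinePowers q c₀ c₁ ⊆ affinePowers q c₀ d₁ ∨
      affinePowers q c₀ d₁ ⊆ affinePowers q c₀ c₁ := by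
  rcases Set.eq_empty_or_nonempty (affinePowers q c₀ c₁ ∩ affinePowers q c₀ d₁) with h | h
  · exact .inl h
  obtain ⟨n, ⟨f, hf⟩, ⟨g, hg⟩⟩ := h
  have hfg : c₁ * (q : ℚ) ^ f = d₁ * (q : ℚ) ^ g := by linarith
  have hq' : (q : ℚ) ≠ 0 := Nat.cast_ne_zero.2 hq
  rcases le_total f g with hle | hle
  · exact .inr (.inl (affinePowers_subset_of_eq_mul_pow
      (eq_mul_pow_sub_of_mul_pow_eq hq' hfg hle)))
  · exact .inr (.inr (affinePowers_subset_of_eq_mul_pow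
      (eq_mul_pow_sub_of_mul_pow_eq hq' hfg.symm hle)))

end SameConstant

section DistinctConstants

variable {q : ℕ} {a b C : ℤ}

theorem lt_natAbs_of_pow_dvd (hq : 1 < q) (hC : C ≠ 0) {f : ℕ} (h : (q : ℤ) ^ f ∣ C) :
    f < C.natAbs := by
  rw [← Nat.cast_pow, Int.natCast_dvd] at h
  exact (Nat.lt_pow_self hq).trans_le (Nat.le_of_dvd (Int.natAbs_pos.2 hC) h)

theorem lt_of_mul_pow_eq_add_mul_pow (hq : 1 < q) (ha : a ≠ 0) {f g M : ℕ} (hg : g ≤ M)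
    (h : a * (q : ℤ) ^ f = C + b * (q : ℤ) ^ g) :
    f < C.natAbs + b.natAbs * q ^ M := calc
  f < q ^ f := Nat.lt_pow_self hq
  _ ≤ a.natAbs * q ^ f := Nat.le_mul_of_pos_left _ (Int.natAbs_pos.2 ha)
  _ = (C + b * (q : ℤ) ^ g).natAbs := by rw [← h, Int.natAbs_mul, Int.natAbs_pow]; rfl
  _ ≤ C.natAbs + b.natAbs * q ^ g := by
    grw [Int.natAbs_add_le, Int.natAbs_mul, Int.natAbs_pow]; rfl
  _ ≤ C.natAbs + b.natAbs * q ^ M := by gcongr; omega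

theorem finite_setOf_mul_pow_eq_add_mul_pow (hq : 1 < q) (ha : a ≠ 0) (hC : C ≠ 0) :
    {f : ℕ | ∃ g : ℕ, a * (q : ℤ) ^ f = C + b * (q : ℤ) ^ g}.Finite := by
  refine (Set.finite_Iio (C.natAbs + b.natAbs * q ^ C.natAbs)).subset ?_
  rintro f ⟨g, h⟩
  have hmin : f ⊓ g < C.natAbs := by
    refine lt_natAbs_of_pow_dvd hq hC ?_
    rw [show C = a * (q : ℤ) ^ f - b * (q : ℤ) ^ g by rw [h]; ring]
    exact dvd_sub ((pow_dvd_pow _ inf_le_left).mul_left a) ((pow_dvd_pow _ inf_le_right).mul_left b)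
  rcases le_total f g with hle | hle
  · simp only [Set.mem_Iio]
    omega
  · exact lt_of_mul_pow_eq_add_mul_pow hq ha (by omega) h

end DistinctConstants

theorem sub_one_mul_eq_of_eq_add_mul_pow {q : ℕ} {c₀ c₁ : ℚ} {a₀ a₁ n : ℤ} {f : ℕ}
    (ha₀ : ((q : ℚ) - 1) * c₀ = a₀) (ha₁ : ((q : ℚ) - 1) * c₁ = a₁)
    (h : (n : ℚ) = c₀ + c₁ * (q : ℚ) ^ f) :
    ((q : ℤ) - 1) * n = a₀ + a₁ * (q : ℤ) ^ f := by
  have : ((((q : ℤ) - 1) * n : ℤ) : ℚ) = ((a₀ + a₁ * (q : ℤ) ^ f : ℤ) : ℚ) := by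
    push_cast
    rw [h, ← ha₀, ← ha₁]
    ring
  exact_mod_cast this

theorem affinePowers_inter_finite {q : ℕ} (hq : 1 < q) {c₀ c₁ d₀ d₁ : ℚ} {a₀ a₁ b₀ b₁ : ℤ}
    (ha₀ : ((q : ℚ) - 1) * c₀ = a₀) (ha₁ : ((q : ℚ) - 1) * c₁ = a₁)
    (hb₀ : ((q : ℚ) - 1) * d₀ = b₀) (hb₁ : ((q : ℚ) - 1) * d₁ = b₁)
    (hc₁0 : c₁ ≠ 0) (hcd : c₀ ≠ d₀) :
    (affinePowers q c₀ c₁ ∩ affinePowers q d₀ d₁).Finite := by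
  have hq' : (q : ℚ) - 1 ≠ 0 := sub_ne_zero.2 (by exact_mod_cast hq.ne')
  have ha₁0 : a₁ ≠ 0 := by
    rintro rfl
    exact hc₁0 ((mul_eq_zero.1 (ha₁.trans Int.cast_zero)).resolve_left hq')
  have hba : b₀ - a₀ ≠ 0 := by
    refine sub_ne_zero.2 fun h => hcd (mul_left_cancel₀ hq' ?_)
    rw [ha₀, hb₀, h]
  refine ((finite_setOf_mul_pow_eq_add_mul_pow hq ha₁0 hba (b := b₁)).image
    fun f => ⌊c₀ + c₁ * (q : ℚ) ^ f⌋).subset ?_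
  rintro n ⟨⟨f, hf⟩, ⟨g, hg⟩⟩
  refine ⟨f, ⟨g, ?_⟩, (congrArg Int.floor hf.symm).trans (Int.floor_intCast n)⟩
  have hcommon := (sub_one_mul_eq_of_eq_add_mul_pow ha₀ ha₁ hf).symm.trans
    (sub_one_mul_eq_of_eq_add_mul_pow hb₀ hb₁ hg)
  linarith

theorem elemNested_inter_elemNested_general (q : ℕ) (hq1 : 1 < q) (c₀ c₁ d₀ d₁ : ℚ)
    (hc₀ : ∃ z : ℤ, ((q : ℚ) - 1) * c₀ = z) (hc₁ : ∃ z : ℤ, ((q : ℚ) - 1) * c₁ = z)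
    (hcsum : ∃ z : ℤ, c₀ + c₁ = z) (hc₁0 : c₁ ≠ 0)
    (hd₀ : ∃ z : ℤ, ((q : ℚ) - 1) * d₀ = z) (hd₁ : ∃ z : ℤ, ((q : ℚ) - 1) * d₁ = z)
    (hdsum : ∃ z : ℤ, d₀ + d₁ = z)
    (S₁ S₂ : Set ℤ)
    (hS₁ : S₁ = {n : ℤ | ∃ f : ℕ, (n : ℚ) = c₀ + c₁ * (q : ℚ) ^ f})
    (hS₂ : S₂ = {n : ℤ | ∃ g : ℕ, (n : ℚ) = d₀ + d₁ * (q : ℚ) ^ g}) :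
    ∃ (m : ℕ) (T : Fin m → Set ℤ),
      (∀ i, (∃ z : ℤ, T i = {z}) ∨ IsElemNestedOne q (T i)) ∧
      S₁ ∩ S₂ = ⋃ i, T i := by
  have hS₁nested : IsElemNestedOne q S₁ := ⟨c₀, c₁, hc₀, hc₁, hcsum, hS₁⟩
  have hS₂nested : IsElemNestedOne q S₂ := ⟨d₀, d₁, hd₀, hd₁, hdsum, hS₂⟩
  change S₁ = affinePowers q c₀ c₁ at hS₁
  change S₂ = affinePowers q d₀ d₁ at hS₂
  subst hS₁ hS₂
  by_cases hcd : c₀ = d₀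
  · subst hcd
    rcases affinePowers_inter_eq_empty_or_subset_or_subset (d₁ := d₁) (by omega : q ≠ 0)
      with h | h | h
    · exact ⟨0, Fin.elim0, fun i => i.elim0, by rw [h, Set.iUnion_of_empty]⟩
    · exact ⟨1, fun _ => _, fun _ => .inr hS₁nested, by rw [Set.inter_eq_left.2 h, Set.iUnion_const]⟩
    · exact ⟨1, fun _ => _, fun _ => .inr hS₂nested, by rw [Set.inter_eq_right.2 h, Set.iUnion_const]⟩
  · obtain ⟨a₀, ha₀⟩ := hc₀
    obtain ⟨a₁, ha₁⟩ := hc₁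
    obtain ⟨b₀, hb₀⟩ := hd₀
    obtain ⟨b₁, hb₁⟩ := hd₁
    obtain ⟨m, T, hT, hTeq⟩ := (affinePowers_inter_finite hq1 ha₀ ha₁ hb₀ hb₁ hc₁0
      hcd).exists_eq_iUnion_fin_singleton
    exact ⟨m, T, fun i => .inl (hT i), hTeq⟩

/-- The intersection of two elementary `p`-nested sets of order 1 in `ℤ` is a
finite union of singletons and elementary `p`-nested sets of order at most 1. -/
theorem elemNested_inter_elemNested (p q : ℕ) (hp : p.Prime) (e : ℕ)
    (hq : q = p ^ e) (hq1 : 1 < q) (c₀ c₁ d₀ d₁ : ℚ)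
    (hc₀ : ∃ z : ℤ, ((q : ℚ) - 1) * c₀ = z) (hc₁ : ∃ z : ℤ, ((q : ℚ) - 1) * c₁ = z)
    (hcsum : ∃ z : ℤ, c₀ + c₁ = z) (hc₁0 : c₁ ≠ 0)
    (hd₀ : ∃ z : ℤ, ((q : ℚ) - 1) * d₀ = z) (hd₁ : ∃ z : ℤ, ((q : ℚ) - 1) * d₁ = z)
    (hdsum : ∃ z : ℤ, d₀ + d₁ = z) (hd₁0 : d₁ ≠ 0)
    (S₁ S₂ : Set ℤ)
    (hS₁ : S₁ = {n : ℤ | ∃ f : ℕ, (n : ℚ) = c₀ + c₁ * (q : ℚ) ^ f})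
    (hS₂ : S₂ = {n : ℤ | ∃ g : ℕ, (n : ℚ) = d₀ + d₁ * (q : ℚ) ^ g}) :
    ∃ (m : ℕ) (T : Fin m → Set ℤ),
      (∀ i, (∃ z : ℤ, T i = {z}) ∨ IsElemNestedOne q (T i)) ∧
      S₁ ∩ S₂ = ⋃ i, T i :=
  elemNested_inter_elemNested_general q hq1 c₀ c₁ d₀ d₁ hc₀ hc₁ hcsum hc₁0 hd₀ hd₁ hdsum S₁ S₂ hS₁
    hS₂
end

section
/- Let q ≥ 2 and let R be a subgroup of ℤ², S ⊆ ℤ² an elementary p-nested set, and (n₁', n₂') ∈ ℤ², Q ∈ ℕ with Q a power of p. Then (n₁', n₂') + Q·(R + S) = R̃ + S̃ where R̃ = QR is a subgroup of ℤ² and S̃ = (n₁', n₂') + QS is again an elementary p-nested set (after adjusting the constant term); in particular the class of p-normal sets in ℤ² is closed under the affine transformation x ↦ v + Qx. -/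
/-- `S ⊆ ℤ²` is an elementary `p`-nested set of order at most `k` with base `q`:
`S = {c₀ + c₁q^{f₁} + ⋯ + c_kq^{f_k} : fᵢ ∈ ℕ}` with `cᵢ ∈ ℚ²`, `(q-1)cᵢ ∈ ℤ²`
and `Σcᵢ ∈ ℤ²`. -/
def IsElemNestedTwo (q k : ℕ) (S : Set (ℤ × ℤ)) : Prop :=
  ∃ c : Fin (k + 1) → ℚ × ℚ,
    (∀ i, (∃ z : ℤ, ((q : ℚ) - 1) * (c i).1 = z) ∧
      (∃ z : ℤ, ((q : ℚ) - 1) * (c i).2 = z)) ∧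
    (∃ z : ℤ × ℤ, (∑ i, c i) = ((z.1 : ℚ), (z.2 : ℚ))) ∧
    S = {n : ℤ × ℤ | ∃ f : Fin k → ℕ,
      ((n.1 : ℚ), (n.2 : ℚ)) = c 0 + ∑ j : Fin k, ((q : ℚ) ^ (f j)) • c j.succ}

/-- If `m * a` and `n * a` are integers with `m, n` coprime naturals,
then `a` is an integer. -/
lemma ratInt_of_coprime_mul (m n : ℕ) (h : Nat.Coprime m n) (a : ℚ)
    (hm : ∃ z : ℤ, (m : ℚ) * a = z) (hn : ∃ z : ℤ, (n : ℚ) * a = z) :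
    ∃ z : ℤ, a = z := by
  obtain ⟨z1, hz1⟩ := hm
  obtain ⟨z2, hz2⟩ := hn
  have hbez : (1 : ℤ) = m * Nat.gcdA m n + n * Nat.gcdB m n := by
    have := Nat.gcd_eq_gcd_ab m n
    rw [h] at this
    exact_mod_cast this
  refine ⟨Nat.gcdA m n * z1 + Nat.gcdB m n * z2, ?_⟩
  have : a = ((m : ℚ) * Nat.gcdA m n + (n : ℚ) * Nat.gcdB m n) * a := by
    have : ((1 : ℤ) : ℚ) = ((m * Nat.gcdA m n + n * Nat.gcdB m n : ℤ) : ℚ) := by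
      exact_mod_cast congrArg (fun z : ℤ => (z : ℚ)) hbez
    push_cast at this
    rw [← this]; ring
  rw [this]
  push_cast
  rw [← hz1, ← hz2]
  ring

/-- The class of `p`-normal sets in `ℤ²` is closed under `x ↦ v + Qx` for `Q` a
power of `p`: `(n₁',n₂') + Q(R + S) = R̃ + S̃` with `R̃ = QR` a subgroup and
`S̃ = (n₁',n₂') + QS` again elementary `p`-nested of the same order. -/
theorem pNormal_affine_transform (p q Q : ℕ) (hp : p.Prime) (e : ℕ)
    (hq : q = p ^ e) (hq2 : 2 ≤ q) (eQ : ℕ) (hQ : Q = p ^ eQ)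
    (R : AddSubgroup (ℤ × ℤ)) (k : ℕ) (S : Set (ℤ × ℤ))
    (hS : IsElemNestedTwo q k S) (v : ℤ × ℤ) :
    ∃ (R' : AddSubgroup (ℤ × ℤ)) (S' : Set (ℤ × ℤ)),
      (R' : Set (ℤ × ℤ)) = (fun x => (Q : ℤ) • x) '' (R : Set (ℤ × ℤ)) ∧
      IsElemNestedTwo q k S' ∧
      {x : ℤ × ℤ | ∃ r ∈ R, ∃ s ∈ S, x = v + (Q : ℤ) • (r + s)} =
        {x : ℤ × ℤ | ∃ r' ∈ R', ∃ s' ∈ S', x = r' + s'} := by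
  obtain ⟨c, hint, ⟨z, hz⟩, hSdef⟩ := hS
  have hint1 := fun i => (hint i).1
  have hint2 := fun i => (hint i).2
  choose z1 hz1 using hint1
  choose z2 hz2 using hint2
  set φ : (ℤ × ℤ) →+ (ℤ × ℤ) :=
    AddMonoidHom.mk' (fun x => (Q : ℤ) • x) (fun a b => smul_add _ a b) with hφ
  set vQ : ℚ × ℚ := ((v.1 : ℚ), (v.2 : ℚ)) with hvQ
  set c' : Fin (k + 1) → ℚ × ℚ :=
    fun i => (Q : ℚ) • c i + if i = 0 then vQ else 0 with hc'
  have hc'0 : c' 0 = (Q : ℚ) • c 0 + vQ := by simp [hc']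
  have hc's : ∀ j : Fin k, c' j.succ = (Q : ℚ) • c j.succ := by
    intro j; simp [hc', Fin.succ_ne_zero]
  have hkey : ∀ f : Fin k → ℕ,
      c' 0 + ∑ j : Fin k, ((q : ℚ) ^ (f j)) • c' j.succ
      = vQ + (Q : ℚ) • (c 0 + ∑ j : Fin k, ((q : ℚ) ^ (f j)) • c j.succ) := by
    intro f
    simp only [hc'0, hc's, smul_add, Finset.smul_sum, smul_smul,
      mul_comm ((q:ℚ) ^ _) (Q:ℚ)]
    abel
  have hcast : ∀ s : ℤ × ℤ, (((v + (Q : ℤ) • s).1 : ℚ), ((v + (Q : ℤ) • s).2 : ℚ))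
      = vQ + (Q : ℚ) • ((s.1 : ℚ), (s.2 : ℚ)) := by
    intro s
    simp [hvQ, Prod.ext_iff, Prod.smul_def, smul_eq_mul]
  have hcop : Nat.Coprime (q - 1) Q := by
    rw [hQ]
    apply Nat.Coprime.pow_right
    rw [Nat.coprime_comm]
    rw [hp.coprime_iff_not_dvd]
    intro hdvd
    have he : e ≠ 0 := by
      rintro rfl
      simp at hq
      omega
    have hpq : p ∣ q := by
      rw [hq]
      exact dvd_pow_self p he
    have h1 : p ∣ 1 := by
      have := Nat.dvd_sub hpq hdvd
      rwa [Nat.sub_sub_self (show 1 ≤ q by omega)] at this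
    have := hp.one_lt
    have := Nat.le_of_dvd one_pos h1
    omega
  refine ⟨R.map φ, (fun x => v + (Q : ℤ) • x) '' S, ?_, ?_, ?_⟩
  · ext x
    simp [hφ]
  · refine ⟨c', ?_, ?_, ?_⟩
    · intro i
      by_cases h : i = 0
      · constructor
        · refine ⟨Q * z1 i + (q - 1) * v.1, ?_⟩
          simp only [hc', h, if_pos rfl, Prod.fst_add, Prod.smul_fst, smul_eq_mul, hvQ]
          push_cast
          rw [show ((q:ℚ) - 1) * ((Q:ℚ) * (c 0).1 + (v.1:ℚ))
              = (Q:ℚ) * (((q:ℚ) - 1) * (c 0).1) + ((q:ℚ)-1) * (v.1:ℚ) by ring, hz1 0]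
        · refine ⟨Q * z2 i + (q - 1) * v.2, ?_⟩
          simp only [hc', h, if_pos rfl, Prod.snd_add, Prod.smul_snd, smul_eq_mul, hvQ]
          push_cast
          rw [show ((q:ℚ) - 1) * ((Q:ℚ) * (c 0).2 + (v.2:ℚ))
              = (Q:ℚ) * (((q:ℚ) - 1) * (c 0).2) + ((q:ℚ)-1) * (v.2:ℚ) by ring, hz2 0]
      · constructor
        · refine ⟨Q * z1 i, ?_⟩
          simp only [hc', if_neg h, add_zero, Prod.smul_fst, smul_eq_mul]
          push_cast
          rw [show ((q:ℚ) - 1) * ((Q:ℚ) * (c i).1)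
              = (Q:ℚ) * (((q:ℚ) - 1) * (c i).1) by ring, hz1 i]
        · refine ⟨Q * z2 i, ?_⟩
          simp only [hc', if_neg h, add_zero, Prod.smul_snd, smul_eq_mul]
          push_cast
          rw [show ((q:ℚ) - 1) * ((Q:ℚ) * (c i).2)
              = (Q:ℚ) * (((q:ℚ) - 1) * (c i).2) by ring, hz2 i]
    · refine ⟨((Q : ℤ) * z.1 + v.1, (Q : ℤ) * z.2 + v.2), ?_⟩
      simp only [hc']
      rw [Finset.sum_add_distrib, ← Finset.smul_sum, hz]
      simp [Finset.sum_ite_eq', hvQ, Prod.ext_iff, Prod.smul_def, smul_eq_mul]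
    · ext n
      simp only [Set.mem_image, Set.mem_setOf_eq]
      constructor
      · rintro ⟨s, hs, rfl⟩
        rw [hSdef] at hs
        obtain ⟨f, hf⟩ := hs
        refine ⟨f, ?_⟩
        rw [hcast s, hf, hkey f]
      · rintro ⟨f, hf⟩
        rw [hkey f] at hf
        set w : ℚ × ℚ := c 0 + ∑ j : Fin k, ((q : ℚ) ^ (f j)) • c j.succ with hw
        have hq1 : ((q - 1 : ℕ) : ℚ) = (q : ℚ) - 1 := by
          have : 1 ≤ q := by omega
          push_cast [this]
          ring
        have hwint1 : ∃ t : ℤ, ((q : ℚ) - 1) * w.1 = t := by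
          refine ⟨z1 0 + ∑ j : Fin k, (q : ℤ) ^ (f j) * z1 j.succ, ?_⟩
          simp only [hw, Prod.fst_add, Prod.fst_sum, Prod.smul_fst, smul_eq_mul]
          push_cast
          rw [mul_add, Finset.mul_sum, hz1 0]
          congr 1
          refine Finset.sum_congr rfl fun j _ => ?_
          rw [show ((q:ℚ) - 1) * ((q:ℚ) ^ (f j) * (c j.succ).1)
              = (q:ℚ) ^ (f j) * (((q:ℚ) - 1) * (c j.succ).1) by ring, hz1 j.succ]
        have hwint2 : ∃ t : ℤ, ((q : ℚ) - 1) * w.2 = t := by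
          refine ⟨z2 0 + ∑ j : Fin k, (q : ℤ) ^ (f j) * z2 j.succ, ?_⟩
          simp only [hw, Prod.snd_add, Prod.snd_sum, Prod.smul_snd, smul_eq_mul]
          push_cast
          rw [mul_add, Finset.mul_sum, hz2 0]
          congr 1
          refine Finset.sum_congr rfl fun j _ => ?_
          rw [show ((q:ℚ) - 1) * ((q:ℚ) ^ (f j) * (c j.succ).2)
              = (q:ℚ) ^ (f j) * (((q:ℚ) - 1) * (c j.succ).2) by ring, hz2 j.succ]
        have hf1 : (n.1 : ℚ) = (v.1 : ℚ) + (Q : ℚ) * w.1 := by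
          have := congrArg Prod.fst hf
          simpa [hvQ, Prod.smul_fst, smul_eq_mul] using this
        have hf2 : (n.2 : ℚ) = (v.2 : ℚ) + (Q : ℚ) * w.2 := by
          have := congrArg Prod.snd hf
          simpa [hvQ, Prod.smul_snd, smul_eq_mul] using this
        have hQw1 : ∃ t : ℤ, (Q : ℚ) * w.1 = t :=
          ⟨n.1 - v.1, by push_cast; linarith⟩
        have hQw2 : ∃ t : ℤ, (Q : ℚ) * w.2 = t :=
          ⟨n.2 - v.2, by push_cast; linarith⟩
        obtain ⟨w1, hw1⟩ := ratInt_of_coprime_mul (q - 1) Q hcop w.1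
          (by rw [hq1]; exact hwint1) hQw1
        obtain ⟨w2, hw2⟩ := ratInt_of_coprime_mul (q - 1) Q hcop w.2
          (by rw [hq1]; exact hwint2) hQw2
        refine ⟨(w1, w2), ?_, ?_⟩
        · rw [hSdef]
          refine ⟨f, ?_⟩
          rw [← hw]
          ext
          · simpa using hw1.symm
          · simpa using hw2.symm
        · have e1 : (n.1 : ℚ) = ((v.1 + Q * w1 : ℤ) : ℚ) := by
            push_cast
            rw [hf1, hw1]
          have e2 : (n.2 : ℚ) = ((v.2 + Q * w2 : ℤ) : ℚ) := by
            push_cast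
            rw [hf2, hw2]
          have e1' : n.1 = v.1 + (Q : ℤ) * w1 := by exact_mod_cast e1
          have e2' : n.2 = v.2 + (Q : ℤ) * w2 := by exact_mod_cast e2
          ext
          · simp [Prod.smul_def, smul_eq_mul, e1'.symm]
          · simp [Prod.smul_def, smul_eq_mul, e2'.symm]
  · ext x
    simp only [Set.mem_setOf_eq]
    constructor
    · rintro ⟨r, hr, s, hs, rfl⟩
      refine ⟨φ r, AddSubgroup.mem_map_of_mem _ hr, v + (Q : ℤ) • s, ⟨s, hs, rfl⟩, ?_⟩
      simp only [hφ, AddMonoidHom.mk'_apply, smul_add]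
      abel
    · rintro ⟨r', hr', s', hs', rfl⟩
      obtain ⟨r, hr, rfl⟩ := hr'
      obtain ⟨s, hs, rfl⟩ := hs'
      refine ⟨r, hr, s, hs, ?_⟩
      simp only [hφ, AddMonoidHom.mk'_apply, smul_add]
      abel
end
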